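/- Let Z, B ⊆ ℕ. Then B is Z-hyperimmune if and only if for every essential Σ⁰₁(Z) predicate φ(U) of finite sets, there exists a finite set A ⊆ ℕ \ B such that φ(A) holds. -/

import Mathlib

open Classical in
/-- The characteristic function of a set of naturals. -/
noncomputable def chi (Z : Set ℕ) : ℕ → ℕ := fun n => if n ∈ Z then 1 else 0

/-- Partial functions `ℕ →. ℕ` recursive in an oracle `O : ℕ → ℕ`. -/
inductive OracleRecursiveIn (O : ℕ → ℕ) : (ℕ →. ℕ) → Prop
  | zero : OracleRecursiveIn O (pure 0)
  | succ : OracleRecursiveIn O ↑Nat.succ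
  | left : OracleRecursiveIn O ↑fun n : ℕ => n.unpair.1
  | right : OracleRecursiveIn O ↑fun n : ℕ => n.unpair.2
  | oracle : OracleRecursiveIn O ↑O
  | pair {f g} : OracleRecursiveIn O f → OracleRecursiveIn O g →
      OracleRecursiveIn O fun n => Nat.pair <$> f n <*> g n
  | comp {f g} : OracleRecursiveIn O f → OracleRecursiveIn O g →
      OracleRecursiveIn O fun n => g n >>= f
  | prec {f g} : OracleRecursiveIn O f → OracleRecursiveIn O g →
      OracleRecursiveIn O (Nat.unpaired fun a n =>
        n.rec (f a) fun y IH => do let i ← IH; g (Nat.pair a (Nat.pair y i)))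
  | rfind {f} : OracleRecursiveIn O f →
      OracleRecursiveIn O fun a => Nat.rfind fun n => (fun m => m = 0) <$> f (Nat.pair a n)

/-- `f : ℕ → ℕ` is computable relative to (the characteristic function of) `Z`. -/
def FunComputableIn (Z : Set ℕ) (f : ℕ → ℕ) : Prop := OracleRecursiveIn (chi Z) f

/-- The set `S` is computable relative to `Z`. -/
def SetComputableIn (Z S : Set ℕ) : Prop := FunComputableIn Z (chi S)

/-- The set `W` is computably enumerable relative to `Z`. -/
def CeIn (Z W : Set ℕ) : Prop := ∃ g : ℕ →. ℕ, OracleRecursiveIn (chi Z) g ∧ W = g.Dom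

/-- The join `X ⊕ Z = {2n : n ∈ X} ∪ {2n+1 : n ∈ Z}`. -/
def join (X Z : Set ℕ) : Set ℕ :=
  {k | (∃ n ∈ X, k = 2 * n) ∨ (∃ n ∈ Z, k = 2 * n + 1)}

/-- `D k` is the finite set of naturals with canonical code `k`. -/
def D (k : ℕ) : Finset ℕ := Denumerable.ofNat (Finset ℕ) k

/-- `B` is `Z`-hyperimmune: every `Z`-c.e. array `(D (f i))_{i}` of pairwise disjoint
finite sets has a member disjoint from `B`. -/
def Hyperimmune (Z B : Set ℕ) : Prop :=
  ∀ f : ℕ → ℕ, FunComputableIn Z f →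
    (∀ i j, i ≠ j → Disjoint (D (f i)) (D (f j))) →
    ∃ i, ∀ x ∈ D (f i), x ∉ B

/-- A Σ⁰₁(Z) predicate of finite sets: the set of canonical codes on which it
holds is computably enumerable relative to `Z`. -/
def Sigma01Pred (Z : Set ℕ) (φ : Finset ℕ → Prop) : Prop := CeIn Z {k | φ (D k)}

/-- A predicate of finite sets is essential if for every `x` it holds of some
finite set all of whose elements exceed `x` (i.e. `min A > x`). -/
def EssentialPred (φ : Finset ℕ → Prop) : Prop :=
  ∀ x : ℕ, ∃ A : Finset ℕ, (∀ a ∈ A, x < a) ∧ φ A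

/-!
(→) A Z-c.e. set is the projection of the zero set of a Z-computable function (the use
principle reduces oracle computations to partial recursive ones on finite oracle segments),
so for an essential Σ⁰₁(Z) predicate φ one can Z-computably find, above any bound `b`, the
code of a finite set satisfying φ. Since the code of a canonical finite set exceeds its
elements, iterating this search with ever larger bounds gives a Z-computable array of
pairwise disjoint sets satisfying φ, and hyperimmunity of B yields one of them inside ℕ \ B.

(←) The members of a Z-computable disjoint array form a Σ⁰₁(Z) predicate, which is
essential because only finitely many pairwise disjoint sets can meet `{0, …, x}`.
-/

open Filter

universe u

theorem Part.mem_map_seq {α β γ : Type u} {h : α → β → γ} {x : Part α} {z : Part β}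
    {y : γ} :
    y ∈ h <$> x <*> z ↔ ∃ a ∈ x, ∃ b ∈ z, h a b = y := by
  simp [Seq.seq]

namespace OracleRecursiveIn

variable {O : ℕ → ℕ}

theorem of_eq {f g : ℕ →. ℕ} (hf : OracleRecursiveIn O f) (h : ∀ n, f n = g n) :
    OracleRecursiveIn O g :=
  funext h ▸ hf

theorem of_partrec {f : ℕ →. ℕ} (hf : Nat.Partrec f) : OracleRecursiveIn O f := by
  induction hf with
  | zero => exact .zero
  | succ => exact .succ
  | left => exact .left
  | right => exact .right
  | pair _ _ ihf ihg => exact .pair ihf ihg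
  | comp _ _ ihf ihg => exact .comp ihf ihg
  | prec _ _ ihf ihg => exact .prec ihf ihg
  | rfind _ ih => exact .rfind ih

theorem of_primrec {f : ℕ → ℕ} (hf : Primrec f) : OracleRecursiveIn O f :=
  of_partrec (Nat.Partrec.of_primrec (Primrec.nat_iff.1 hf))

theorem comp_total {f g : ℕ → ℕ} (hf : OracleRecursiveIn O f) (hg : OracleRecursiveIn O g) :
    OracleRecursiveIn O fun n => f (g n) :=
  (hf.comp hg).of_eq fun _ => Part.bind_some _ _

theorem pair_total {f g : ℕ → ℕ} (hf : OracleRecursiveIn O f) (hg : OracleRecursiveIn O g) :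
    OracleRecursiveIn O fun n => Nat.pair (f n) (g n) :=
  (hf.pair hg).of_eq fun n => by simp [PFun.coe_val, Seq.seq]

theorem primrec₂_comp {h : ℕ → ℕ → ℕ} {f g : ℕ → ℕ} (hh : Primrec₂ h)
    (hf : OracleRecursiveIn O f) (hg : OracleRecursiveIn O g) :
    OracleRecursiveIn O fun n => h (f n) (g n) := by
  have hh' : Primrec fun m : ℕ => h m.unpair.1 m.unpair.2 :=
    hh.comp (Primrec.fst.comp Primrec.unpair) (Primrec.snd.comp Primrec.unpair)
  simpa using (of_primrec hh').comp_total (pair_total hf hg)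

theorem nat_rec_total (a : ℕ) {g : ℕ → ℕ → ℕ}
    (hg : OracleRecursiveIn O fun m => g m.unpair.1 m.unpair.2) :
    OracleRecursiveIn O fun n => Nat.rec (motive := fun _ => ℕ) a g n := by
  have hg' : OracleRecursiveIn O fun m => g m.unpair.2.unpair.1 m.unpair.2.unpair.2 :=
    hg.comp_total (of_primrec (Primrec.snd.comp Primrec.unpair))
  have hprec := OracleRecursiveIn.prec (of_primrec (Primrec.const a)) hg'
  have hrec :
      OracleRecursiveIn O (Nat.unpaired fun _ n => Nat.rec (motive := fun _ => ℕ) a g n) :=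
    hprec.of_eq fun m => by
      simp only [Nat.unpaired, PFun.coe_val]
      induction m.unpair.2 with
      | zero => rfl
      | succ n ih => simp_all [Part.bind_eq_bind]
  simpa using hrec.comp_total (of_primrec (Primrec₂.natPair.comp (Primrec.const 0) Primrec.id))

theorem exists_find {Q : ℕ → ℕ} (hQ : OracleRecursiveIn O Q)
    (hQ0 : ∀ a, ∃ n, Q (Nat.pair a n) = 0) :
    ∃ F : ℕ → ℕ, OracleRecursiveIn O F ∧ ∀ a, Q (Nat.pair a (F a)) = 0 := by
  classical
  refine ⟨fun a => Nat.find (hQ0 a), hQ.rfind.of_eq fun a => ?_, fun a => Nat.find_spec (hQ0 a)⟩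
  refine Part.eq_some_iff.2 (Nat.mem_rfind.2 ⟨?_, fun hm => ?_⟩)
  · simp [PFun.coe_val, Nat.find_spec (hQ0 a)]
  · simp [PFun.coe_val, Nat.find_min (hQ0 a) hm]

theorem exists_dom_iff_of_total {Q : ℕ → ℕ} (hQ : OracleRecursiveIn O Q) :
    ∃ g : ℕ →. ℕ, OracleRecursiveIn O g ∧
      ∀ k, (g k).Dom ↔ ∃ n, Q (Nat.pair k n) = 0 := by
  refine ⟨_, hQ.rfind, fun k => ⟨fun h => ?_, fun ⟨n, hn⟩ => ?_⟩⟩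
  · obtain ⟨n, hn⟩ := Part.dom_iff_mem.1 h
    exact ⟨n, by simpa [PFun.coe_val] using Nat.rfind_spec hn⟩
  · obtain ⟨m, hm, -⟩ :=
      Nat.rfind_min' (p := fun n => decide (Q (Nat.pair k n) = 0)) (by simpa using hn)
    exact Part.dom_iff_mem.2 ⟨m, hm⟩

end OracleRecursiveIn

def initSeg (O : ℕ → ℕ) (u : ℕ) : List ℕ := (List.range u).map O

theorem getElem?_initSeg {O : ℕ → ℕ} {u n : ℕ} :
    (initSeg O u)[n]? = if n < u then some (O n) else none := by
  split_ifs with h <;> simp [initSeg, h]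

theorem OracleRecursiveIn.encode_initSeg (O : ℕ → ℕ) :
    OracleRecursiveIn O fun u => Encodable.encode (initSeg O u) := by
  have hsnoc :
      Primrec₂ fun (e v : ℕ) => Encodable.encode (Denumerable.ofNat (List ℕ) e ++ [v]) :=
    Primrec.encode.comp₂ (Primrec.list_append.comp₂ ((Primrec.ofNat _).comp Primrec.fst).to₂
      (Primrec.list_cons.comp₂ Primrec₂.right (Primrec₂.const [])))
  have hstep : OracleRecursiveIn O fun m =>
      Encodable.encode (Denumerable.ofNat (List ℕ) m.unpair.2 ++ [O m.unpair.1]) :=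
    .primrec₂_comp hsnoc (.of_primrec (Primrec.snd.comp Primrec.unpair))
      (OracleRecursiveIn.oracle.comp_total (.of_primrec (Primrec.fst.comp Primrec.unpair)))
  have hrec : ∀ u, Nat.rec (motive := fun _ => ℕ) (Encodable.encode ([] : List ℕ))
      (fun y e => Encodable.encode (Denumerable.ofNat (List ℕ) e ++ [O y])) u =
      Encodable.encode (initSeg O u) := by
    intro u
    induction u with
    | zero => rfl
    | succ u ih => dsimp only at ih ⊢; rw [ih]; simp [initSeg, List.range_succ]
  exact (OracleRecursiveIn.nat_rec_total _ hstep).of_eq fun u => by rw [hrec]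

/-- The use principle: `G` computes `f` from finite initial segments of the oracle, correctly on
every segment and completely on all long enough ones. -/
def SegmentComputable (O : ℕ → ℕ) (f : ℕ →. ℕ) : Prop :=
  ∃ G : List ℕ → ℕ →. ℕ, Partrec₂ G ∧
    (∀ u n, ∀ y ∈ G (initSeg O u) n, y ∈ f n) ∧
    ∀ n, ∀ y ∈ f n, ∀ᶠ u in atTop, y ∈ G (initSeg O u) n

namespace SegmentComputable

variable {O : ℕ → ℕ}

theorem of_partrec {f : ℕ →. ℕ} (hf : Nat.Partrec f) : SegmentComputable O f :=
  ⟨fun _ n => f n, (Partrec.nat_iff.2 hf).comp Computable.snd, fun _ _ _ hy => hy,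
    fun _ _ hy => .of_forall fun _ => hy⟩

theorem oracle : SegmentComputable O O := by
  refine ⟨fun L n => L[n]?,
    Computable.ofOption (Computable.list_getElem?.comp Computable.fst Computable.snd),
    fun u n y hy => ?_, fun n y hy => ?_⟩
  · simp only [getElem?_initSeg] at hy
    split_ifs at hy <;> simp_all
  · filter_upwards [eventually_gt_atTop n] with u hu
    simp_all [getElem?_initSeg]

theorem pair {f g : ℕ →. ℕ} (hf : SegmentComputable O f) (hg : SegmentComputable O g) :
    SegmentComputable O fun n => Nat.pair <$> f n <*> g n := by
  obtain ⟨Gf, pf, sf, cf⟩ := hf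
  obtain ⟨Gg, pg, sg, cg⟩ := hg
  refine ⟨fun L n => Nat.pair <$> Gf L n <*> Gg L n, ?_, fun u n y hy => ?_, fun n y hy => ?_⟩
  · have hGg : Partrec fun q : (List ℕ × ℕ) × ℕ => Gg q.1.1 q.1.2 :=
      pg.comp (Computable.fst.comp Computable.fst) (Computable.snd.comp Computable.fst)
    have hpair : Computable₂ fun (q : (List ℕ × ℕ) × ℕ) (b : ℕ) => Nat.pair q.2 b :=
      (Primrec₂.natPair.comp (Primrec.snd.comp Primrec.fst) Primrec.snd).to_comp
    refine (pf.bind (hGg.map hpair).to₂).of_eq fun p => Part.ext fun y => ?_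
    simp only [Part.mem_map_seq]
    simp
  · obtain ⟨a, ha, b, hb, rfl⟩ := Part.mem_map_seq.1 hy
    exact Part.mem_map_seq.2 ⟨a, sf u n a ha, b, sg u n b hb, rfl⟩
  · obtain ⟨a, ha, b, hb, rfl⟩ := Part.mem_map_seq.1 hy
    filter_upwards [cf n a ha, cg n b hb] with u h1 h2
    exact Part.mem_map_seq.2 ⟨a, h1, b, h2, rfl⟩

theorem comp {f g : ℕ →. ℕ} (hf : SegmentComputable O f) (hg : SegmentComputable O g) :
    SegmentComputable O fun n => g n >>= f := by
  obtain ⟨Gf, pf, sf, cf⟩ := hf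
  obtain ⟨Gg, pg, sg, cg⟩ := hg
  refine ⟨fun L n => (Gg L n).bind (Gf L),
    pg.bind ((pf.comp (Computable.fst.comp Computable.fst) Computable.snd).to₂),
    fun u n y hy => ?_, fun n y hy => ?_⟩
  · obtain ⟨a, ha, hy⟩ := Part.mem_bind_iff.1 hy
    exact Part.mem_bind_iff.2 ⟨a, sg u n a ha, sf u a y hy⟩
  · obtain ⟨a, ha, hy⟩ := Part.mem_bind_iff.1 hy
    filter_upwards [cg n a ha, cf a y hy] with u h1 h2
    exact Part.mem_bind_iff.2 ⟨a, h1, h2⟩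

theorem prec {f g : ℕ →. ℕ} (hf : SegmentComputable O f) (hg : SegmentComputable O g) :
    SegmentComputable O (Nat.unpaired fun a n =>
      n.rec (f a) fun y IH => do let i ← IH; g (Nat.pair a (Nat.pair y i))) := by
  obtain ⟨Gf, pf, sf, cf⟩ := hf
  obtain ⟨Gg, pg, sg, cg⟩ := hg
  refine ⟨fun L => Nat.unpaired fun a n =>
      n.rec (Gf L a) fun y IH => IH.bind fun i => Gg L (Nat.pair a (Nat.pair y i)), ?_,
    fun u n => ?_, fun n => ?_⟩
  · have hbase : Partrec fun p : List ℕ × ℕ => Gf p.1 p.2.unpair.1 :=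
      pf.comp Computable.fst (Primrec.fst.comp (Primrec.unpair.comp Primrec.snd)).to_comp
    have hstep : Partrec₂ fun (p : List ℕ × ℕ) (yi : ℕ × ℕ) =>
        Gg p.1 (Nat.pair p.2.unpair.1 (Nat.pair yi.1 yi.2)) :=
      pg.comp (Computable.fst.comp Computable.fst)
        (Primrec₂.natPair.comp ((Primrec.fst.comp (Primrec.unpair.comp Primrec.snd)).comp
          Primrec.fst) (Primrec₂.natPair.comp (Primrec.fst.comp Primrec.snd)
            (Primrec.snd.comp Primrec.snd))).to_comp
    exact Partrec.nat_rec (Primrec.snd.comp (Primrec.unpair.comp Primrec.snd)).to_comp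
      hbase hstep
  · simp only [Nat.unpaired]
    induction n.unpair.2 with
    | zero => exact sf u _
    | succ m ih =>
      intro y hy
      obtain ⟨i, hi, hy⟩ := Part.mem_bind_iff.1 hy
      exact Part.mem_bind_iff.2 ⟨i, ih i hi, sg u _ y hy⟩
  · simp only [Nat.unpaired]
    induction n.unpair.2 with
    | zero => exact cf _
    | succ m ih =>
      intro y hy
      obtain ⟨i, hi, hy⟩ := Part.mem_bind_iff.1 hy
      filter_upwards [ih i hi, cg _ y hy] with u h1 h2
      exact Part.mem_bind_iff.2 ⟨i, h1, h2⟩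

theorem rfind {f : ℕ →. ℕ} (hf : SegmentComputable O f) :
    SegmentComputable O fun a =>
      Nat.rfind fun n => (fun m => decide (m = 0)) <$> f (Nat.pair a n) := by
  obtain ⟨Gf, pf, sf, cf⟩ := hf
  refine ⟨fun L a => Nat.rfind fun n => (fun m => decide (m = 0)) <$> Gf L (Nat.pair a n),
    ?_, fun u a y hy => ?_, fun a y hy => ?_⟩
  · have hGf : Partrec fun q : (List ℕ × ℕ) × ℕ => Gf q.1.1 (Nat.pair q.1.2 q.2) :=
      pf.comp (Computable.fst.comp Computable.fst)
        (Primrec₂.natPair.comp (Primrec.snd.comp Primrec.fst) Primrec.snd).to_comp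
    have hzero : Computable₂ fun (_ : (List ℕ × ℕ) × ℕ) (m : ℕ) => decide (m = 0) :=
      (Primrec.eq.comp Primrec.snd (Primrec.const 0)).decide.to_comp
    exact Partrec.rfind (hGf.map hzero).to₂
  · have sound : ∀ x (b : Bool), b ∈ (fun m => decide (m = 0)) <$> Gf (initSeg O u) x →
        b ∈ (fun m => decide (m = 0)) <$> f x := fun x b hb => by
      obtain ⟨m, hm, rfl⟩ := (Part.mem_map_iff _).1 hb
      exact Part.mem_map _ (sf u x m hm)
    obtain ⟨htrue, hfalse⟩ := Nat.mem_rfind.1 hy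
    exact Nat.mem_rfind.2 ⟨sound _ _ htrue, fun hm => sound _ _ (hfalse hm)⟩
  · have complete : ∀ x (b : Bool), b ∈ (fun m => decide (m = 0)) <$> f x →
        ∀ᶠ u in atTop, b ∈ (fun m => decide (m = 0)) <$> Gf (initSeg O u) x :=
      fun x b hb => by
      obtain ⟨m, hm, rfl⟩ := (Part.mem_map_iff _).1 hb
      exact (cf x m hm).mono fun u hu => Part.mem_map _ hu
    obtain ⟨htrue, hfalse⟩ := Nat.mem_rfind.1 hy
    have hbefore := (Filter.eventually_all_finset (Finset.range y)).2
      fun m hm => complete _ _ (hfalse (Finset.mem_range.1 hm))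
    filter_upwards [complete _ _ htrue, hbefore] with u h1 h2
    exact Nat.mem_rfind.2 ⟨h1, fun hm => h2 _ (Finset.mem_range.2 hm)⟩

end SegmentComputable

theorem OracleRecursiveIn.segmentComputable {O : ℕ → ℕ} {f : ℕ →. ℕ}
    (hf : OracleRecursiveIn O f) : SegmentComputable O f := by
  induction hf with
  | zero => exact .of_partrec .zero
  | succ => exact .of_partrec .succ
  | left => exact .of_partrec .left
  | right => exact .of_partrec .right
  | oracle => exact .oracle
  | pair _ _ ihf ihg => exact ihf.pair ihg
  | comp _ _ ihf ihg => exact ihf.comp ihg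
  | prec _ _ ihf ihg => exact ihf.prec ihg
  | rfind _ ihf => exact ihf.rfind

open Nat.Partrec in
theorem Partrec.exists_primrec_dom_iff {α σ : Type*} [Primcodable α] [Primcodable σ]
    {f : α →. σ} (hf : Partrec f) :
    ∃ T : α → ℕ → Bool, Primrec₂ T ∧ ∀ a, (f a).Dom ↔ ∃ s, T a s = true := by
  obtain ⟨c, hc⟩ := Code.exists_code.1 hf
  refine ⟨fun a s => (Code.evaln s c (Encodable.encode a)).isSome,
    Primrec.option_isSome.comp (Code.primrec_evaln.comp
      ((Primrec.snd.pair (Primrec.const c)).pair (Primrec.encode.comp Primrec.fst))), fun a => ?_⟩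
  have hdom : (f a).Dom ↔ (c.eval (Encodable.encode a)).Dom := by
    simp [hc, Encodable.encodek]
  rw [hdom, Part.dom_iff_mem]
  simp only [Code.evaln_complete, Option.isSome_iff_exists, Option.mem_def]
  exact ⟨fun ⟨_, s, h⟩ => ⟨s, _, h⟩, fun ⟨s, _, h⟩ => ⟨_, s, h⟩⟩

theorem OracleRecursiveIn.exists_total_of_dom {O : ℕ → ℕ} {g : ℕ →. ℕ}
    (hg : OracleRecursiveIn O g) :
    ∃ t : ℕ → ℕ, OracleRecursiveIn O t ∧
      ∀ k, (g k).Dom ↔ ∃ p, t (Nat.pair k p) = 0 := by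
  obtain ⟨G, pG, sound, complete⟩ := hg.segmentComputable
  obtain ⟨T, hT, hTdom⟩ := Partrec.exists_primrec_dom_iff pG
  have hdom : ∀ k, (g k).Dom ↔ ∃ u, (G (initSeg O u) k).Dom := fun k => by
    simp only [Part.dom_iff_mem]
    exact ⟨fun ⟨y, hy⟩ => ((complete k y hy).exists).imp fun _ h => ⟨y, h⟩,
      fun ⟨u, y, hy⟩ => ⟨y, sound u k y hy⟩⟩
  -- `test ⟨k, ⟨u, s⟩⟩ (encode (initSeg O u)) = 0` iff `G (initSeg O u) k` halts within
  -- `s` steps.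
  let test : ℕ → ℕ → ℕ := fun m e =>
    bif T (Denumerable.ofNat (List ℕ) e, m.unpair.1) m.unpair.2.unpair.2 then 0 else 1
  have htest : Primrec₂ test :=
    (Primrec.cond (hT.comp (((Primrec.ofNat _).comp Primrec.snd).pair
        ((Primrec.fst.comp Primrec.unpair).comp Primrec.fst))
      ((Primrec.snd.comp Primrec.unpair).comp ((Primrec.snd.comp Primrec.unpair).comp
        Primrec.fst))) (Primrec.const 0) (Primrec.const 1)).to₂
  refine ⟨fun m => test m (Encodable.encode (initSeg O m.unpair.2.unpair.1)),
    .primrec₂_comp htest (.of_primrec Primrec.id) ((encode_initSeg O).comp_total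
      (.of_primrec ((Primrec.fst.comp Primrec.unpair).comp (Primrec.snd.comp Primrec.unpair)))),
    fun k => ?_⟩
  rw [hdom]
  simp only [test, Nat.unpair_pair, Denumerable.ofNat_encode, cond_eq_ite, ite_eq_left_iff,
    one_ne_zero, imp_false, not_not, fun u => hTdom (initSeg O u, k)]
  exact ⟨fun ⟨u, s, h⟩ => ⟨Nat.pair u s, by simpa using h⟩,
    fun ⟨p, h⟩ => ⟨p.unpair.1, p.unpair.2, h⟩⟩

theorem ceIn_iff_exists_zero {Z W : Set ℕ} :
    CeIn Z W ↔
      ∃ t : ℕ → ℕ, FunComputableIn Z t ∧ ∀ k, k ∈ W ↔ ∃ p, t (Nat.pair k p) = 0 := by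
  constructor
  · rintro ⟨g, hg, rfl⟩
    exact hg.exists_total_of_dom
  · rintro ⟨t, ht, hW⟩
    obtain ⟨g, hg, hdom⟩ := OracleRecursiveIn.exists_dom_iff_of_total ht
    exact ⟨g, hg, Set.ext fun k => (hW k).trans (hdom k).symm⟩

section CanonicalCode

open Denumerable

theorem mem_D_iff {x k : ℕ} : x ∈ D k ↔ x ∈ raise' (ofNat (List ℕ) k) 0 := by
  show x ∈ Finset.map _ (raise'Finset _ 0) ↔ _
  simp only [raise'Finset, Finset.mem_map_equiv, Equiv.symm_symm]
  exact Iff.rfl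

theorem le_of_mem_raise' : ∀ {l : List ℕ} {n x : ℕ}, x ∈ raise' l n → n ≤ x
  | m :: l, n, x, h => by
    rcases List.mem_cons.1 h with rfl | h
    · omega
    · have := le_of_mem_raise' h; omega

theorem lt_add_encode_of_mem_raise' :
    ∀ {l : List ℕ} {n x : ℕ}, x ∈ raise' l n → x < n + Encodable.encode l
  | m :: l, n, x, h => by
    have hpair := Nat.add_le_pair m (Encodable.encode l)
    simp only [Encodable.encode_list_cons, Encodable.encode_nat]
    rcases List.mem_cons.1 h with rfl | h
    · omega
    · have := lt_add_encode_of_mem_raise' h; omega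

theorem lt_of_mem_D {x k : ℕ} (h : x ∈ D k) : x < k := by
  simpa using lt_add_encode_of_mem_raise' (mem_D_iff.1 h)

-- `D k` is listed increasingly by `raise'`, so its minimum is the head of the code list; the
-- default `b + 1` makes the test hold for `D k = ∅`.
theorem forall_lt_of_mem_D_iff {b k : ℕ} :
    (∀ x ∈ D k, b < x) ↔ b < ((ofNat (List ℕ) k).head?).getD (b + 1) := by
  simp only [mem_D_iff]
  cases ofNat (List ℕ) k with
  | nil => simp [raise']
  | cons m l =>
    simp only [raise', List.mem_cons, forall_eq_or_imp, List.head?_cons, Option.getD_some]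
    exact ⟨And.left, fun h => ⟨by omega, fun x hx => by have := le_of_mem_raise' hx; omega⟩⟩

theorem D_injective : Function.Injective D := (eqv (Finset ℕ)).symm.injective

end CanonicalCode

theorem Sigma01Pred.exists_computableIn_witness {Z : Set ℕ} {φ : Finset ℕ → Prop}
    (hφ : Sigma01Pred Z φ) (hess : EssentialPred φ) :
    ∃ next : ℕ → ℕ, FunComputableIn Z next ∧ (∀ b, φ (D (next b))) ∧
      ∀ b, ∀ x ∈ D (next b), b < x := by
  obtain ⟨t, ht, hφt⟩ := ceIn_iff_exists_zero.1 hφ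
  let gap : ℕ → ℕ → ℕ := fun b k =>
    b + 1 - ((Denumerable.ofNat (List ℕ) k).head?).getD (b + 1)
  have hgap : ∀ b k, gap b k = 0 ↔ ∀ x ∈ D k, b < x := fun b k => by
    rw [forall_lt_of_mem_D_iff]
    exact Nat.sub_eq_zero_iff_le
  -- `Q ⟨b, ⟨k, p⟩⟩ = 0` iff `p` witnesses `φ (D k)` and `D k` lies above `b`.
  let Q : ℕ → ℕ := fun m => t m.unpair.2 + gap m.unpair.1 m.unpair.2.unpair.1
  have hgapP : Primrec₂ gap :=
    Primrec.nat_sub.comp₂ (Primrec.succ.comp₂ Primrec₂.left) (Primrec.option_getD.comp₂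
      (Primrec.list_head?.comp₂ ((Primrec.ofNat _).comp₂ Primrec₂.right))
      (Primrec.succ.comp₂ Primrec₂.left))
  have hQ : FunComputableIn Z Q :=
    .primrec₂_comp (h := (· + ·)) Primrec.nat_add
      (ht.comp_total (.of_primrec (Primrec.snd.comp Primrec.unpair)))
      (.of_primrec (hgapP.comp (Primrec.fst.comp Primrec.unpair)
        ((Primrec.fst.comp Primrec.unpair).comp (Primrec.snd.comp Primrec.unpair))))
  have hQ0 : ∀ b, ∃ n, Q (Nat.pair b n) = 0 := by
    intro b
    obtain ⟨A, hA, hφA⟩ := hess b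
    have hDA : D (Denumerable.eqv _ A) = A := (Denumerable.eqv _).symm_apply_apply A
    obtain ⟨p, hp⟩ := (hφt (Denumerable.eqv _ A)).1 (by simpa [hDA] using hφA)
    refine ⟨Nat.pair (Denumerable.eqv _ A) p, ?_⟩
    simp only [Q, Nat.unpair_pair, hp, zero_add, hgap, hDA]
    exact hA
  obtain ⟨F, hF, hFQ⟩ := OracleRecursiveIn.exists_find hQ hQ0
  have hFQ' : ∀ b, t (F b) = 0 ∧ gap b (F b).unpair.1 = 0 := fun b => by
    have := hFQ b
    simp only [Q, Nat.unpair_pair] at this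
    omega
  refine ⟨fun b => (F b).unpair.1,
    (OracleRecursiveIn.of_primrec (Primrec.fst.comp Primrec.unpair)).comp_total hF,
    fun b => (hφt _).2 ⟨(F b).unpair.2, by rw [Nat.pair_unpair]; exact (hFQ' b).1⟩,
    fun b => (hgap _ _).1 (hFQ' b).2⟩

theorem Hyperimmune.exists_subset_compl {Z B : Set ℕ} (hB : Hyperimmune Z B)
    {φ : Finset ℕ → Prop} (hφ : Sigma01Pred Z φ) (hess : EssentialPred φ) :
    ∃ A : Finset ℕ, (↑A : Set ℕ) ⊆ Bᶜ ∧ φ A := by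
  obtain ⟨next, hnext, hφnext, habove⟩ := hφ.exists_computableIn_witness hess
  -- Elements of `D k` are below `k`, so the bounds `c (i + 1) = c i + next (c i)` separate
  -- the sets.
  let c : ℕ → ℕ := fun i => Nat.rec (motive := fun _ => ℕ) 0 (fun _ b => b + next b) i
  have hc : FunComputableIn Z c :=
    OracleRecursiveIn.nat_rec_total 0 (.primrec₂_comp Primrec.nat_add
      (.of_primrec (Primrec.snd.comp Primrec.unpair))
      (hnext.comp_total (.of_primrec (Primrec.snd.comp Primrec.unpair))))
  have hdisj : ∀ i j, i ≠ j → Disjoint (D (next (c i))) (D (next (c j))) := by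
    have hmono : Monotone c := monotone_nat_of_le_succ fun i => Nat.le_add_right _ _
    have hIoo : ∀ i, (↑(D (next (c i))) : Set ℕ) ⊆ Set.Ioo (c i) (c (i + 1)) :=
      fun i x hx => ⟨habove _ x hx, (lt_of_mem_D hx).trans_le (Nat.le_add_left _ _)⟩
    exact fun i j hij => Finset.disjoint_coe.1
      ((hmono.pairwise_disjoint_on_Ioo_succ hij).mono (hIoo i) (hIoo j))
  obtain ⟨i, hi⟩ := hB (fun i => next (c i)) (hnext.comp_total hc) hdisj
  exact ⟨D (next (c i)), fun x hx => hi x hx, hφnext _⟩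

theorem exists_forall_lt_of_pairwise_disjoint {S : ℕ → Finset ℕ}
    (hS : Pairwise fun i j => Disjoint (S i) (S j)) (x : ℕ) : ∃ i, ∀ a ∈ S i, x < a := by
  by_contra! h
  choose a haS hax using h
  have hinj : Function.Injective fun i => (⟨a i, Nat.lt_succ_of_le (hax i)⟩ : Fin (x + 1)) :=
    fun i j hij => by
      have hij : a i = a j := congrArg Fin.val hij
      by_contra hne
      exact Finset.disjoint_left.1 (hS hne) (haS i) (hij ▸ haS j)
  exact not_injective_infinite_finite _ hinj

theorem ceIn_range {Z : Set ℕ} {f : ℕ → ℕ} (hf : FunComputableIn Z f) :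
    CeIn Z (Set.range f) := by
  refine ceIn_iff_exists_zero.2
    ⟨fun m => (f m.unpair.2 - m.unpair.1) + (m.unpair.1 - f m.unpair.2), ?_, fun k => ?_⟩
  · have hdist : Primrec₂ fun a b : ℕ => (a - b) + (b - a) :=
      Primrec.nat_add.comp₂ Primrec.nat_sub
        (Primrec.nat_sub.comp₂ Primrec₂.right Primrec₂.left)
    exact .primrec₂_comp (h := fun a b => (a - b) + (b - a)) hdist
      (hf.comp_total (.of_primrec (Primrec.snd.comp Primrec.unpair)))
      (.of_primrec (Primrec.fst.comp Primrec.unpair))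
  · simp only [Set.mem_range, Nat.unpair_pair]
    exact ⟨fun ⟨i, hi⟩ => ⟨i, by omega⟩, fun ⟨i, hi⟩ => ⟨i, by omega⟩⟩

theorem sigma01Pred_mem_range {Z : Set ℕ} {f : ℕ → ℕ} (hf : FunComputableIn Z f) :
    Sigma01Pred Z (· ∈ Set.range fun i => D (f i)) := by
  have hcodes : {k | D k ∈ Set.range fun i => D (f i)} = Set.range f := by
    ext k
    simp [D_injective.eq_iff]
  rw [Sigma01Pred, hcodes]
  exact ceIn_range hf

/-- `B` is `Z`-hyperimmune iff every essential Σ⁰₁(Z) predicate of finite sets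
holds of some finite set `A ⊆ ℕ \ B`. -/
theorem stmt0 (Z B : Set ℕ) :
    Hyperimmune Z B ↔
      ∀ φ : Finset ℕ → Prop, Sigma01Pred Z φ → EssentialPred φ →
        ∃ A : Finset ℕ, (↑A : Set ℕ) ⊆ Bᶜ ∧ φ A := by
  refine ⟨fun hB φ hφ hess => hB.exists_subset_compl hφ hess, fun h f hf hdisj => ?_⟩
  have hess : EssentialPred (· ∈ Set.range fun i => D (f i)) := fun x =>
    let ⟨i, hi⟩ := exists_forall_lt_of_pairwise_disjoint hdisj x
    ⟨_, hi, i, rfl⟩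
  obtain ⟨_, hAB, i, rfl⟩ := h _ (sigma01Pred_mem_range hf) hess
  exact ⟨i, fun x hx => hAB hx⟩
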